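/- Define polynomials \(b_n(\lambda)\) by \(b_0(\lambda) = 1\) and the recurrence \(b_n(\lambda) = -\lambda b_{n-1}(\lambda) - \frac{1}{4} \sum_{i=2}^{n} (-2)^i b_{n-i}(\lambda)\). Then \(b_n(\lambda) = \sum_{t=0}^{n} \sum_{k=0}^{n} \sum_{\ell=0}^{k} \binom{k}{t} \binom{t}{\ell} (-1)^k 2^{2k-n+t-2\ell} \left[ 4\binom{k-t}{2k-n-\ell+1} + \binom{k-t}{2k-n-\ell} \right] \lambda^t\). -/

import Mathlib

/-!
Adding twice the recurrence at `n + 1` to the recurrence at `n + 2` collapses the convolution,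
leaving `b (n + 2) = -(λ + 2) b (n + 1) - (2λ + 1) b n` with `b 0 = 1`, `b 1 = -λ`.
Group the claimed formula by `k`: the `k`-th slice is the coefficient of `xⁿ` in
`(1 + 2x) (-(λ + 2) x - (2λ + 1) x²) ^ k`, so slice `k + 1` at `n` equals
`-(λ + 2)` times slice `k` at `n - 1` plus `-(2λ + 1)` times slice `k` at `n - 2`. Termwise this
is Pascal's rule applied to each of the three binomial coefficients `C(k, t)`, `C(t, ℓ)` and
`C(k - t, ·)`. Slice `k` vanishes outside `k ≤ n ≤ 2k + 1`, so summing over `k` shows that the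
formula obeys the same three-term recurrence with the same two initial values.
-/

/-- Binomial coefficient with integer arguments, defined to be 0 when the
lower index is negative or exceeds the upper index. -/
def binomZ (a b : ℤ) : ℚ :=
  if 0 ≤ b ∧ b ≤ a then (a.toNat.choose b.toNat : ℚ) else 0

open Finset

lemma binomZ_of_neg {a b : ℤ} (h : b < 0) : binomZ a b = 0 :=
  if_neg fun hb => by omega

lemma binomZ_of_lt {a b : ℤ} (h : a < b) : binomZ a b = 0 :=
  if_neg fun hb => by omega

lemma binomZ_natCast (a b : ℕ) : binomZ a b = a.choose b := by
  unfold binomZ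
  split_ifs with h
  · simp
  · rw [Nat.choose_eq_zero_of_lt (by omega), Nat.cast_zero]

lemma binomZ_add_one_add_one {a : ℤ} (ha : 0 ≤ a) (b : ℤ) :
    binomZ (a + 1) (b + 1) = binomZ a (b + 1) + binomZ a b := by
  lift a to ℕ using ha
  rcases lt_trichotomy b (-1) with hb | rfl | hb
  · rw [binomZ_of_neg (by omega), binomZ_of_neg (by omega), binomZ_of_neg (by omega), add_zero]
  · rw [binomZ_of_neg (show (-1 : ℤ) < 0 by norm_num), add_zero, neg_add_cancel]
    simp [binomZ, Int.add_nonneg]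
  · lift b to ℕ using (by omega)
    exact_mod_cast (binomZ_natCast (a + 1) (b + 1)).trans (by
      rw [Nat.choose_succ_succ', Nat.cast_add, binomZ_natCast, binomZ_natCast, add_comm])

lemma sum_range_choose_succ_mul (f : ℕ → ℚ) (m N : ℕ) :
    ∑ t ∈ range (N + 1), ((m + 1).choose t : ℚ) * f t =
      ∑ t ∈ range (N + 1), (m.choose t : ℚ) * f t +
        ∑ t ∈ range N, (m.choose t : ℚ) * f (t + 1) := by
  simp only [sum_range_succ' _ N, Nat.choose_succ_succ', Nat.cast_add, add_mul,
    sum_add_distrib, Nat.choose_zero_right]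
  ring

lemma sum_Icc_two_add_two (b : ℕ → ℚ) (n : ℕ) :
    ∑ i ∈ Icc 2 (n + 2), (-2 : ℚ) ^ i * b (n + 2 - i) =
      4 * b n - 2 * ∑ i ∈ Icc 2 (n + 1), (-2 : ℚ) ^ i * b (n + 1 - i) := by
  rw [← Ico_add_one_right_eq_Icc, ← Ico_add_one_right_eq_Icc, sum_Ico_eq_sum_range,
    sum_Ico_eq_sum_range, show n + 2 + 1 - 2 = n + 1 by omega, show n + 1 + 1 - 2 = n by omega,
    sum_range_succ', mul_sum, sub_eq_add_neg, ← sum_neg_distrib, add_comm (4 * b n)]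
  congr 1
  refine sum_congr rfl fun j _ => ?_
  rw [show n + 2 - (2 + (j + 1)) = n + 1 - (2 + j) by omega]
  ring

namespace ProductionCharPoly

def recurrence (lam : ℚ) : LinearRecurrence ℚ := ⟨2, ![-(2 * lam + 1), -(lam + 2)]⟩

lemma isSolution_recurrence_iff (lam : ℚ) (u : ℕ → ℚ) : (recurrence lam).IsSolution u ↔
    ∀ n, u (n + 2) = -(lam + 2) * u (n + 1) - (2 * lam + 1) * u n := by
  refine forall_congr' fun n => ?_
  change u (n + 2) = ∑ i : Fin 2, ![-(2 * lam + 1), -(lam + 2)] i * u (n + i) ↔ _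
  simp only [Fin.sum_univ_two, Matrix.cons_val_zero, Matrix.cons_val_one, Fin.val_zero,
    Fin.val_one, add_zero]
  constructor <;> intro h <;> linarith

lemma add_two_of_rec {lam : ℚ} {b : ℕ → ℚ}
    (hrec : ∀ n, 1 ≤ n →
      b n = -lam * b (n - 1) - (1 / 4) * ∑ i ∈ Icc 2 n, (-2 : ℚ) ^ i * b (n - i)) (n : ℕ) :
    b (n + 2) = -(lam + 2) * b (n + 1) - (2 * lam + 1) * b n := by
  have h2 := hrec (n + 2) (by omega)
  have h1 := hrec (n + 1) (by omega)
  rw [show n + 2 - 1 = n + 1 by omega, sum_Icc_two_add_two] at h2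
  rw [Nat.add_sub_cancel] at h1
  linear_combination h2 + 2 * h1

def core (a m e : ℤ) : ℚ := 2 ^ e * (4 * binomZ a (m + 1) + binomZ a m)

lemma core_add_one_add_two {a : ℤ} (ha : 0 ≤ a) (m e : ℤ) :
    core (a + 1) (m + 2) (e + 2) = 2 * core a (m + 1) (e + 1) + core a (m + 2) (e + 2) := by
  have h3 := binomZ_add_one_add_one ha (m + 2)
  have h2 := binomZ_add_one_add_one ha (m + 1)
  rw [show m + 1 + 1 = m + 2 by ring] at h2
  simp only [core]
  rw [show m + 1 + 1 = m + 2 by ring, h2, h3, show e + 2 = e + 1 + 1 by ring,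
    zpow_add_one₀ two_ne_zero]
  ring

lemma core_exp_add_one (a m e : ℤ) : core a m (e + 1) = 2 * core a m e := by
  rw [core, core, zpow_add_one₀ two_ne_zero]
  ring

lemma core_of_lt {a m : ℤ} (h : a < m) (e : ℤ) : core a m e = 0 := by
  rw [core, binomZ_of_lt h, binomZ_of_lt (by omega)]
  ring

lemma core_of_neg {a m : ℤ} (h : m + 1 < 0) (e : ℤ) : core a m e = 0 := by
  rw [core, binomZ_of_neg h, binomZ_of_neg (by omega)]
  ring

def weight (lam : ℚ) (n : ℤ) (k t l : ℕ) : ℚ :=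
  (-1) ^ k * core (k - t) (2 * k - n - l) (2 * k - n + t - 2 * l) * lam ^ t

def summand (lam : ℚ) (n : ℤ) (k t l : ℕ) : ℚ := k.choose t * t.choose l * weight lam n k t l

def slice (lam : ℚ) (k : ℕ) (n : ℤ) : ℚ :=
  ∑ t ∈ range (k + 1), ∑ l ∈ range (k + 1), summand lam n k t l

def formula (lam : ℚ) (n : ℕ) : ℚ := ∑ k ∈ range (n + 1), slice lam k n

variable (lam : ℚ) (n : ℤ) (k t l : ℕ)

lemma weight_succ_of_le {t : ℕ} (h : t ≤ k) :
    weight lam n (k + 1) t l = -2 * weight lam (n - 1) k t l - weight lam (n - 2) k t l := by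
  have hcore := core_add_one_add_two (a := k - t) (by omega) (2 * k - n - l) (2 * k - n + t - 2 * l)
  simp only [weight]
  push_cast
  convert congrArg (fun x => -(-1) ^ k * x * lam ^ t) hcore using 1 <;> ring_nf

lemma weight_succ_succ :
    weight lam n (k + 1) (t + 1) l = -(2 * lam) * weight lam (n - 2) k t l := by
  have hcore := core_exp_add_one (k - t) (2 * k - (n - 2) - l) (2 * k - (n - 2) + t - 2 * l)
  simp only [weight]
  push_cast
  convert congrArg (fun x => -lam * (-1) ^ k * x * lam ^ t) hcore using 1
  · ring_nf
  · ring

lemma weight_succ_succ_succ :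
    weight lam n (k + 1) (t + 1) (l + 1) = -lam * weight lam (n - 1) k t l := by
  simp only [weight]
  push_cast
  ring_nf

lemma summand_eq_zero {k t l : ℕ} (h : k < t ∨ t < l) : summand lam n k t l = 0 := by
  rcases h with h | h <;> simp [summand, Nat.choose_eq_zero_of_lt h]

lemma summand_eq : summand lam n k t l =
    (k.choose t : ℚ) * (t.choose l : ℚ) * (-1) ^ k * (2 : ℚ) ^ (2 * (k : ℤ) - n + t - 2 * l) *
      (4 * binomZ ((k : ℤ) - t) (2 * (k : ℤ) - n - l + 1) +
        binomZ ((k : ℤ) - t) (2 * (k : ℤ) - n - l)) * lam ^ t := by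
  rw [summand, weight, core]
  ring

lemma slice_eq_sum_range {M N : ℕ} (hM : k + 1 ≤ M) (hN : k + 1 ≤ N) :
    ∑ t ∈ range M, ∑ l ∈ range N, summand lam n k t l = slice lam k n := by
  symm
  refine (sum_subset (range_subset_range.2 hM) fun t _ ht => ?_).trans
    (sum_congr rfl fun t _ => sum_subset (range_subset_range.2 hN) fun l _ hl => ?_)
  · exact sum_eq_zero fun l _ => summand_eq_zero lam n (by simp at ht; omega)
  · exact summand_eq_zero lam n (by simp at hl; omega)

lemma slice_succ : slice lam (k + 1) n =
    -(lam + 2) * slice lam k (n - 1) - (2 * lam + 1) * slice lam k (n - 2) := by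
  have hkeep : ∀ t, (k.choose t : ℚ) * ∑ l ∈ range (k + 2), t.choose l * weight lam n (k + 1) t l =
      -2 * ∑ l ∈ range (k + 2), summand lam (n - 1) k t l -
        ∑ l ∈ range (k + 2), summand lam (n - 2) k t l := by
    intro t
    rcases le_or_gt t k with h | h
    · simp only [mul_sum, ← sum_sub_distrib, summand, weight_succ_of_le lam n k _ h]
      exact sum_congr rfl fun l _ => by ring
    · simp [summand, Nat.choose_eq_zero_of_lt h]
  have hraise : ∀ t, (k.choose t : ℚ) *
      ∑ l ∈ range (k + 2), (t + 1).choose l * weight lam n (k + 1) (t + 1) l =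
      -(2 * lam) * ∑ l ∈ range (k + 2), summand lam (n - 2) k t l -
        lam * ∑ l ∈ range (k + 1), summand lam (n - 1) k t l := by
    intro t
    rw [sum_range_choose_succ_mul, mul_add, sub_eq_add_neg, ← neg_mul lam]
    simp only [weight_succ_succ_succ]
    simp only [mul_sum, summand, weight_succ_succ]
    congr 1 <;> exact sum_congr rfl fun l _ => by ring
  calc slice lam (k + 1) n
      = ∑ t ∈ range (k + 2), ((k + 1).choose t : ℚ) *
          ∑ l ∈ range (k + 2), t.choose l * weight lam n (k + 1) t l := by
        simp only [slice, summand, mul_sum, mul_assoc]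
    _ = ∑ t ∈ range (k + 2), (k.choose t : ℚ) *
          ∑ l ∈ range (k + 2), t.choose l * weight lam n (k + 1) t l +
        ∑ t ∈ range (k + 1), (k.choose t : ℚ) *
          ∑ l ∈ range (k + 2), (t + 1).choose l * weight lam n (k + 1) (t + 1) l :=
        sum_range_choose_succ_mul _ _ _
    _ = (-2 * slice lam k (n - 1) - slice lam k (n - 2)) +
        (-(2 * lam) * slice lam k (n - 2) - lam * slice lam k (n - 1)) := by
        simp only [hkeep, hraise, sum_sub_distrib, ← mul_sum]
        rw [slice_eq_sum_range lam _ k (by omega) (by omega),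
          slice_eq_sum_range lam _ k (by omega) (by omega),
          slice_eq_sum_range lam _ k (by omega) (by omega),
          slice_eq_sum_range lam _ k (by omega) (by omega)]
    _ = _ := by ring

lemma slice_eq_zero_of_lt (h : n < k) : slice lam k n = 0 :=
  sum_eq_zero fun t ht => sum_eq_zero fun l _ => by
    rcases lt_or_ge t l with htl | hlt
    · exact summand_eq_zero lam n (Or.inr htl)
    · rw [summand, weight, core_of_lt (by simp at ht; omega)]
      simp

lemma slice_eq_zero_of_two_mul_add_one_lt (h : 2 * k + 1 < n) : slice lam k n = 0 :=
  sum_eq_zero fun t _ => sum_eq_zero fun l _ => by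
    rw [summand, weight, core_of_neg (by omega)]
    simp

lemma formula_zero : formula lam 0 = 1 := by
  norm_num [formula, slice, summand, weight, core, binomZ]

lemma formula_one : formula lam 1 = -lam := by
  norm_num [formula, slice, summand, weight, core, binomZ, sum_range_succ,
    show Int.toNat 2 = 2 from rfl]

lemma formula_add_two (n : ℕ) :
    formula lam (n + 2) = -(lam + 2) * formula lam (n + 1) - (2 * lam + 1) * formula lam n := by
  have hs : ∀ k, slice lam (k + 1) (n + 2 : ℕ) =
      -(lam + 2) * slice lam k (n + 1 : ℕ) - (2 * lam + 1) * slice lam k n := fun k => by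
    rw [slice_succ, show ((n + 2 : ℕ) : ℤ) - 1 = (n + 1 : ℕ) by push_cast; ring,
      show ((n + 2 : ℕ) : ℤ) - 2 = n by push_cast; ring]
  rw [formula, sum_range_succ',
    slice_eq_zero_of_two_mul_add_one_lt lam _ 0 (by push_cast; omega), add_zero]
  simp only [hs, sum_sub_distrib, ← mul_sum]
  rw [formula, formula, sum_range_succ (fun k => slice lam k n) (n + 1),
    slice_eq_zero_of_lt lam n (n + 1) (by omega), add_zero]

lemma formula_eq_sum (n : ℕ) : formula lam n = ∑ t ∈ range (n + 1), ∑ k ∈ range (n + 1),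
      ∑ l ∈ range (k + 1), summand lam n k t l := by
  rw [formula, sum_comm]
  exact sum_congr rfl fun k hk => (slice_eq_sum_range lam n k (by simp at hk; omega) le_rfl).symm

end ProductionCharPoly

/-- Let `b n = b_n(λ)` satisfy `b_0(λ) = 1` and
`b_n(λ) = -λ b_{n-1}(λ) - (1/4) ∑_{i=2}^{n} (-2)^i b_{n-i}(λ)`.
Then `b_n(λ) = ∑_{t=0}^{n} ∑_{k=0}^{n} ∑_{ℓ=0}^{k} C(k,t) C(t,ℓ) (-1)^k
2^{2k-n+t-2ℓ} [4 C(k-t, 2k-n-ℓ+1) + C(k-t, 2k-n-ℓ)] λ^t`. -/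
theorem stmt6 (lam : ℚ) (b : ℕ → ℚ) (h0 : b 0 = 1)
    (hrec : ∀ n, 1 ≤ n →
      b n = -lam * b (n - 1) -
        (1 / 4) * ∑ i ∈ Finset.Icc 2 n, (-2 : ℚ) ^ i * b (n - i)) :
    ∀ n, b n = ∑ t ∈ Finset.range (n + 1), ∑ k ∈ Finset.range (n + 1),
      ∑ l ∈ Finset.range (k + 1),
        (Nat.choose k t : ℚ) * (Nat.choose t l : ℚ) * (-1) ^ k *
          (2 : ℚ) ^ (2 * (k : ℤ) - n + t - 2 * l) *
          (4 * binomZ ((k : ℤ) - t) (2 * (k : ℤ) - n - l + 1) +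
            binomZ ((k : ℤ) - t) (2 * (k : ℤ) - n - l)) * lam ^ t := by
  open ProductionCharPoly in
  have h1 : b 1 = -lam := by simpa [h0] using hrec 1 le_rfl
  have hb := (isSolution_recurrence_iff lam b).2 (add_two_of_rec hrec)
  have hf := (isSolution_recurrence_iff lam _).2 (formula_add_two lam)
  have hbf : b = formula lam := (LinearRecurrence.eq_iff_eqOn_range_order _ _ _ hb hf).2
    fun n hn => by
      obtain rfl | rfl : n = 0 ∨ n = 1 := by simp [recurrence] at hn; omega
      · rw [h0, formula_zero]
      · rw [h1, formula_one]
  intro n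
  simp only [hbf, formula_eq_sum, summand_eq]
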